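/- arXiv:2507.10926 — 2 statements merged into one kernel-verified Lean document; each statement's English description precedes it below -/
import Mathlib

section
/- Let n ∈ ℕ, ε > 0, μ ∈ ℝ, and let X₁, …, Xₙ be independent identically distributed real random variables on a probability space such that P(|Xᵢ − μ| ≤ ε) ≥ 4/5 for each i. Let M be any random variable such that almost surely at least n/2 of the indices i satisfy Xᵢ ≤ M and at least n/2 of the indices i satisfy Xᵢ ≥ M (i.e., M is a median of X₁,…,Xₙ). Then P(|M − μ| > ε) ≤ exp(−9n/50). -/
open MeasureTheory ProbabilityTheory
open scoped Classical ENNReal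

/-- Probability-boosting ('powering') lemma: if `X₁, …, Xₙ` are i.i.d. real
random variables each lying within `ε` of `μ` with probability at least `4/5`,
and `M` is (almost surely) a median of `X₁, …, Xₙ`, then
`P(|M - μ| > ε) ≤ exp (-9n/50)`. -/
theorem stmt1 {Ω : Type*} [MeasurableSpace Ω] (P : Measure Ω)
    [IsProbabilityMeasure P]
    (n : ℕ) (hn : 0 < n) (ε : ℝ) (hε : 0 < ε) (μ : ℝ)
    (X : Fin n → Ω → ℝ) (hmeas : ∀ i, Measurable (X i))
    (hindep : iIndepFun X P)
    (hident : ∀ i j, Measure.map (X i) P = Measure.map (X j) P)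
    (hprob : ∀ i, (4 : ENNReal) / 5 ≤ P {ω | |X i ω - μ| ≤ ε})
    (M : Ω → ℝ)
    (hmed : ∀ᵐ ω ∂P,
      (n : ℝ) / 2 ≤ (Finset.univ.filter (fun i => X i ω ≤ M ω)).card ∧
      (n : ℝ) / 2 ≤ (Finset.univ.filter (fun i => M ω ≤ X i ω)).card) :
    P {ω | ε < |M ω - μ|} ≤ ENNReal.ofReal (Real.exp (-9 * n / 50)) := by
  -- the "tilted" variables
  set g : ℝ → ℝ≥0∞ := fun x => if ε < |x - μ| then 4 else 1 with hg
  have hgmeas : Measurable g := by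
    apply Measurable.ite _ measurable_const measurable_const
    exact measurableSet_lt measurable_const ((measurable_id.sub_const μ).abs)
  set Z : Fin n → Ω → ℝ≥0∞ := fun i ω => g (X i ω) with hZ
  have hZmeas : ∀ i, Measurable (Z i) := fun i => hgmeas.comp (hmeas i)
  have hZindep : iIndepFun Z P :=
    hindep.comp (fun _ => g) (fun _ => hgmeas)
  -- Step 1: a.e. inclusion of the bad event
  have step1 : P {ω | ε < |M ω - μ|} ≤ P {ω | (2 : ℝ≥0∞) ^ n ≤ ∏ i, Z i ω} := by
    apply measure_mono_ae
    filter_upwards [hmed] with ω hω hbad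
    have hcard : (n : ℝ) / 2 ≤
        ((Finset.univ.filter (fun i => ε < |X i ω - μ|)).card : ℝ) := by
      rcases lt_abs.mp hbad with h | h
      · refine le_trans hω.2 ?_
        have : (Finset.univ.filter (fun i => M ω ≤ X i ω)) ⊆
            (Finset.univ.filter (fun i => ε < |X i ω - μ|)) := by
          intro i hi
          simp only [Finset.mem_filter, Finset.mem_univ, true_and] at hi ⊢
          have : ε < X i ω - μ := lt_of_lt_of_le h (by linarith)
          exact lt_of_lt_of_le this (le_abs_self _)
        exact_mod_cast Finset.card_le_card this
      · refine le_trans hω.1 ?_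
        have : (Finset.univ.filter (fun i => X i ω ≤ M ω)) ⊆
            (Finset.univ.filter (fun i => ε < |X i ω - μ|)) := by
          intro i hi
          simp only [Finset.mem_filter, Finset.mem_univ, true_and] at hi ⊢
          have : ε < -(X i ω - μ) := lt_of_lt_of_le h (by linarith)
          exact lt_of_lt_of_le this (neg_le_abs _)
        exact_mod_cast Finset.card_le_card this
    set k := (Finset.univ.filter (fun i => ε < |X i ω - μ|)).card with hk
    have hnk : n ≤ 2 * k := by
      have h := (div_le_iff₀ (by norm_num : (0:ℝ) < 2)).mp hcard
      have h2 : (n : ℝ) ≤ 2 * k := by linarith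
      exact_mod_cast h2
    have hprod : ∏ i, Z i ω = 4 ^ k := by
      simp only [hZ, hg]
      rw [Finset.prod_ite, Finset.prod_const, Finset.prod_const, one_pow, mul_one]
    show (2 : ℝ≥0∞) ^ n ≤ ∏ i, Z i ω
    rw [hprod]
    calc (2 : ℝ≥0∞) ^ n ≤ 2 ^ (2 * k) := pow_le_pow_right₀ one_le_two hnk
      _ = 4 ^ k := by rw [pow_mul]; norm_num
  -- Step 2: Markov with product of independent variables
  have hprodmeas : Measurable (fun ω => ∏ i, Z i ω) :=
    Finset.measurable_prod _ fun i _ => hZmeas i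
  have markov := mul_meas_ge_le_lintegral₀ (hprodmeas.aemeasurable (μ := P)) ((2 : ℝ≥0∞) ^ n)
  -- Step 3: factorize the integral
  have key : ∀ s : Finset (Fin n),
      ∫⁻ ω, ∏ i ∈ s, Z i ω ∂P = ∏ i ∈ s, ∫⁻ ω, Z i ω ∂P := by
    intro s
    induction s using Finset.induction_on with
    | empty => simp
    | @insert a s ha ih =>
      rw [Finset.prod_insert ha]
      have hind : IndepFun (Z a) (∏ j ∈ s, Z j) P :=
        (hZindep.indepFun_finsetProd_of_notMem hZmeas ha).symm
      have hpm : Measurable (∏ j ∈ s, Z j) := by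
        rw [Finset.prod_fn]
        exact Finset.measurable_prod _ fun i _ => hZmeas i
      calc ∫⁻ ω, ∏ i ∈ insert a s, Z i ω ∂P
          = ∫⁻ ω, Z a ω * (∏ j ∈ s, Z j) ω ∂P := by
            apply lintegral_congr fun ω => ?_
            rw [Finset.prod_insert ha, Finset.prod_apply]
        _ = (∫⁻ ω, Z a ω ∂P) * ∫⁻ ω, (∏ j ∈ s, Z j) ω ∂P :=
            lintegral_mul_eq_lintegral_mul_lintegral_of_indepFun''
              (hZmeas a).aemeasurable hpm.aemeasurable hind
        _ = (∫⁻ ω, Z a ω ∂P) * ∏ i ∈ s, ∫⁻ ω, Z i ω ∂P := by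
            rw [← ih]; congr 1; exact lintegral_congr fun ω => Finset.prod_apply ..
  -- Step 4: each factor is at most 8/5
  have factor : ∀ i, ∫⁻ ω, Z i ω ∂P ≤ 8 / 5 := by
    intro i
    have hG : MeasurableSet {ω | |X i ω - μ| ≤ ε} :=
      measurableSet_le ((hmeas i).sub_const μ).abs measurable_const
    have hrepr : ∀ ω, Z i ω =
        1 + ({ω | |X i ω - μ| ≤ ε}ᶜ).indicator (fun _ => (3 : ℝ≥0∞)) ω := by
      intro ω
      by_cases h : ε < |X i ω - μ|
      · rw [Set.indicator_of_mem (by simpa using not_le.mpr h)]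
        simp [hZ, hg, h]; norm_num
      · rw [Set.indicator_of_notMem (by simpa using not_lt.mp h)]
        simp [hZ, hg, h]
    have hcompl : P ({ω | |X i ω - μ| ≤ ε}ᶜ) ≤ 1 / 5 := by
      rw [measure_compl hG (measure_ne_top _ _)]
      have h1 : (1 : ℝ≥0∞) - 4 / 5 = 1 / 5 := by
        rw [ENNReal.sub_eq_of_eq_add (by simp [ENNReal.div_eq_top])]
        rw [ENNReal.div_add_div_same, show ((1:ℝ≥0∞)+4)=5 by norm_num,
          ENNReal.div_self (by norm_num) (by norm_num)]
      calc P Set.univ - P {ω | |X i ω - μ| ≤ ε} ≤ 1 - 4 / 5 := by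
            rw [measure_univ]; exact tsub_le_tsub_left (hprob i) 1
        _ = 1 / 5 := h1
    calc ∫⁻ ω, Z i ω ∂P
        = ∫⁻ ω, 1 + ({ω | |X i ω - μ| ≤ ε}ᶜ).indicator (fun _ => (3:ℝ≥0∞)) ω ∂P :=
          lintegral_congr hrepr
      _ = 1 + 3 * P ({ω | |X i ω - μ| ≤ ε}ᶜ) := by
          rw [lintegral_add_left measurable_const,
            lintegral_indicator_const hG.compl, lintegral_const, measure_univ, mul_one]
      _ ≤ 1 + 3 * (1 / 5) := by
          gcongr
      _ ≤ 8 / 5 := by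
          rw [← mul_div_assoc, mul_one,
            show (1:ℝ≥0∞) = 5/5 from (ENNReal.div_self (by norm_num) (by norm_num)).symm,
            ENNReal.div_add_div_same]
          norm_num
  -- Step 5: put everything together
  have hint : ∫⁻ ω, ∏ i, Z i ω ∂P ≤ (8 / 5 : ℝ≥0∞) ^ n := by
    rw [key Finset.univ]
    calc ∏ i, ∫⁻ ω, Z i ω ∂P ≤ ∏ _i : Fin n, (8/5 : ℝ≥0∞) :=
          Finset.prod_le_prod' fun i _ => factor i
      _ = (8/5 : ℝ≥0∞) ^ n := by simp
  have hexp : (8 / 5 : ℝ≥0∞) ^ n ≤ 2 ^ n * ENNReal.ofReal (Real.exp (-9 * n / 50)) := by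
    have h85 : (8 / 5 : ℝ≥0∞) = 2 * (4 / 5) := by
      rw [← mul_div_assoc]; norm_num
    rw [h85, mul_pow]
    gcongr
    have h45 : (4 / 5 : ℝ≥0∞) = ENNReal.ofReal (4 / 5) := by
      rw [ENNReal.ofReal_div_of_pos (by norm_num)]
      norm_num
    rw [h45, ← ENNReal.ofReal_pow (by norm_num)]
    apply ENNReal.ofReal_le_ofReal
    have : (-9 : ℝ) * n / 50 = n * (-9 / 50) := by ring
    rw [this, Real.exp_nat_mul]
    apply pow_le_pow_left₀ (by norm_num)
    have := Real.add_one_le_exp (-9 / 50 : ℝ)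
    linarith
  have h2n : (2 : ℝ≥0∞) ^ n ≠ 0 := by positivity
  have h2ntop : (2 : ℝ≥0∞) ^ n ≠ ⊤ := by exact ENNReal.pow_ne_top (by norm_num)
  have final : (2:ℝ≥0∞)^n * P {ω | (2 : ℝ≥0∞) ^ n ≤ ∏ i, Z i ω}
      ≤ (2:ℝ≥0∞)^n * ENNReal.ofReal (Real.exp (-9 * n / 50)) :=
    le_trans markov (le_trans hint hexp)
  exact le_trans step1 ((ENNReal.mul_le_mul_iff_right h2n h2ntop).mp final)
end

section
/- Let U > 0, h > 0, ε > 0, t₁ ∈ ℝ, suppose U·h² ≤ ε/4, and let γ : ℝ → ℝ be twice differentiable on an interval containing [t₁ − h, t₁ + h] with |γ''(s)| ≤ U there. Let ĝ₁, ĝ₀ ∈ ℝ satisfy |ĝ₁ − γ(t₁)| ≤ ε/4 and |ĝ₀ − γ(t₁ − h)| ≤ ε/4, and set s = (ĝ₁ − ĝ₀)/h. Then for every t ∈ [t₁, t₁ + h], |s·(t − t₁) + ĝ₁ − γ(t)| ≤ ε. -/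
open Set

lemma taylor1_le (U a b : ℝ) (hab : a ≤ b) (f f' f'' : ℝ → ℝ)
    (hd1 : ∀ s ∈ Icc a b, HasDerivAt f (f' s) s)
    (hd2 : ∀ s ∈ Icc a b, HasDerivAt f' (f'' s) s)
    (hb : ∀ s ∈ Icc a b, |f'' s| ≤ U) :
    f b - f a - f' a * (b - a) ≤ U * (b - a) ^ 2 / 2 := by
  have ha : a ∈ Icc a b := ⟨le_refl a, hab⟩
  -- Lipschitz bound on f'
  have hlip : ∀ t ∈ Icc a b, |f' t - f' a| ≤ U * (t - a) := by
    intro t ht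
    have := Convex.norm_image_sub_le_of_norm_hasDerivWithin_le
      (f := f') (f' := f'') (C := U) (s := Icc a b)
      (fun s hs => (hd2 s hs).hasDerivWithinAt)
      (fun s hs => by simpa using hb s hs) (convex_Icc a b) ha ht
    simpa [abs_of_nonneg (sub_nonneg.mpr ht.1), Real.norm_eq_abs] using this
  set φ : ℝ → ℝ := fun t => U * (t - a) ^ 2 / 2 - (f t - f a - f' a * (t - a)) with hφ
  have hφd : ∀ t ∈ Icc a b, HasDerivAt φ (U * (t - a) - (f' t - f' a)) t := by
    intro t ht
    have h1 : HasDerivAt (fun t => U * (t - a) ^ 2 / 2) (U * (t - a)) t := by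
      have : HasDerivAt (fun t : ℝ => (t - a)) 1 t := (hasDerivAt_id t).sub_const a
      have := ((this.pow 2).const_mul U).div_const 2
      exact this.congr_deriv (by ring)
    have h2 : HasDerivAt (fun t => f t - f a - f' a * (t - a)) (f' t - f' a) t := by
      have := ((hd1 t ht).sub_const (f a)).sub
        (((hasDerivAt_id t).sub_const a).const_mul (f' a))
      exact this.congr_deriv (by ring)
    exact h1.sub h2
  have hmono : MonotoneOn φ (Icc a b) := by
    apply monotoneOn_of_deriv_nonneg (convex_Icc a b)
    · exact fun t ht => ((hφd t ht).continuousAt).continuousWithinAt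
    · intro t ht
      rw [interior_Icc] at ht
      exact ((hφd t (Ioo_subset_Icc_self ht)).differentiableAt).differentiableWithinAt
    · intro t ht
      rw [interior_Icc] at ht
      have ht' : t ∈ Icc a b := Ioo_subset_Icc_self ht
      rw [(hφd t ht').deriv]
      have := abs_le.mp (hlip t ht')
      linarith [this.2]
  have := hmono ha ⟨hab, le_refl b⟩ hab
  simp only [hφ] at this
  simp only [sub_self, mul_zero, zero_pow, ne_eq, OfNat.ofNat_ne_zero,
    not_false_eq_true, zero_div, mul_zero] at this
  nlinarith [this]

lemma taylor1_abs (U a b : ℝ) (hab : a ≤ b) (f f' f'' : ℝ → ℝ)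
    (hd1 : ∀ s ∈ Icc a b, HasDerivAt f (f' s) s)
    (hd2 : ∀ s ∈ Icc a b, HasDerivAt f' (f'' s) s)
    (hb : ∀ s ∈ Icc a b, |f'' s| ≤ U) :
    |f b - f a - f' a * (b - a)| ≤ U * (b - a) ^ 2 / 2 := by
  have h1 := taylor1_le U a b hab f f' f'' hd1 hd2 hb
  have h2 := taylor1_le U a b hab (fun t => -f t) (fun t => -f' t) (fun t => -f'' t)
    (fun s hs => (hd1 s hs).neg) (fun s hs => (hd2 s hs).neg)
    (fun s hs => by simpa [abs_neg] using hb s hs)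
  rw [abs_le]; constructor <;> nlinarith [h2]


/-- Combined linear-extrapolation accuracy: if the extrapolation window has the
same length `h` as the spacing of the two `ε/4`-accurate data points, and
`U * h² ≤ ε/4`, then the linear extrapolant is `ε`-accurate on `[t₁, t₁ + h]`. -/
theorem stmt5 (U h ε t₁ : ℝ) (hU : 0 < U) (hh : 0 < h) (hε : 0 < ε)
    (hcond : U * h ^ 2 ≤ ε / 4)
    (γ γ' γ'' : ℝ → ℝ)
    (hderiv1 : ∀ s ∈ Set.Icc (t₁ - h) (t₁ + h), HasDerivAt γ (γ' s) s)
    (hderiv2 : ∀ s ∈ Set.Icc (t₁ - h) (t₁ + h), HasDerivAt γ' (γ'' s) s)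
    (hbound : ∀ s ∈ Set.Icc (t₁ - h) (t₁ + h), |γ'' s| ≤ U)
    (g1 g0 : ℝ)
    (hg1 : |g1 - γ t₁| ≤ ε / 4)
    (hg0 : |g0 - γ (t₁ - h)| ≤ ε / 4) :
    ∀ t ∈ Set.Icc t₁ (t₁ + h),
      |(g1 - g0) / h * (t - t₁) + g1 - γ t| ≤ ε := by
  intro t ht
  obtain ⟨ht1, ht2⟩ := ht
  have hsub : Icc t₁ t ⊆ Icc (t₁ - h) (t₁ + h) := by
    apply Icc_subset_Icc <;> linarith
  -- forward Taylor bound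
  have hA : |γ t - γ t₁ - γ' t₁ * (t - t₁)| ≤ U * (t - t₁) ^ 2 / 2 :=
    taylor1_abs U t₁ t ht1 γ γ' γ''
      (fun s hs => hderiv1 s (hsub hs)) (fun s hs => hderiv2 s (hsub hs))
      (fun s hs => hbound s (hsub hs))
  have hA' : |γ t - γ t₁ - γ' t₁ * (t - t₁)| ≤ U * h ^ 2 / 2 := by
    refine hA.trans ?_
    have h1 : (t - t₁) ^ 2 ≤ h ^ 2 := by nlinarith
    nlinarith
  -- backward Taylor bound via reflection
  have hmem : ∀ s ∈ Icc t₁ (t₁ + h), 2 * t₁ - s ∈ Icc (t₁ - h) (t₁ + h) := by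
    intro s hs
    obtain ⟨h1, h2⟩ := hs
    constructor <;> linarith
  have hB : |γ (t₁ - h) - γ t₁ + γ' t₁ * h| ≤ U * h ^ 2 / 2 := by
    have key := taylor1_abs U t₁ (t₁ + h) (by linarith)
      (fun s => γ (2 * t₁ - s)) (fun s => -γ' (2 * t₁ - s)) (fun s => γ'' (2 * t₁ - s))
      (fun s hs => by
        have hr : HasDerivAt (fun x : ℝ => 2 * t₁ - x) (-1) s :=
          (hasDerivAt_id s).const_sub (2 * t₁)
        have := (hderiv1 _ (hmem s hs)).comp s hr
        exact this.congr_deriv (by ring))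
      (fun s hs => by
        have hr : HasDerivAt (fun x : ℝ => 2 * t₁ - x) (-1) s :=
          (hasDerivAt_id s).const_sub (2 * t₁)
        have := ((hderiv2 _ (hmem s hs)).comp s hr).neg
        exact this.congr_deriv (by ring))
      (fun s hs => hbound _ (hmem s hs))
    have e1 : (2 : ℝ) * t₁ - (t₁ + h) = t₁ - h := by ring
    have e2 : (2 : ℝ) * t₁ - t₁ = t₁ := by ring
    simp only [e1, e2] at key
    have : |γ (t₁ - h) - γ t₁ - -γ' t₁ * (t₁ + h - t₁)| ≤ U * (t₁ + h - t₁) ^ 2 / 2 := key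
    have heq : γ (t₁ - h) - γ t₁ - -γ' t₁ * (t₁ + h - t₁) = γ (t₁ - h) - γ t₁ + γ' t₁ * h := by
      ring
    have heq2 : (t₁ + h - t₁) ^ 2 = h ^ 2 := by ring
    rw [heq, heq2] at this
    exact this
  -- algebra
  set e1 := g1 - γ t₁ with he1
  set e0 := g0 - γ (t₁ - h) with he0
  set A := γ t - γ t₁ - γ' t₁ * (t - t₁) with hA0
  set B := γ (t₁ - h) - γ t₁ + γ' t₁ * h with hB0
  have hexpr : (g1 - g0) / h * (t - t₁) + g1 - γ t
      = (e1 - e0 - B) * (t - t₁) / h + e1 - A := by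
    field_simp [he1, he0, hA0, hB0]
    ring
  rw [hexpr]
  have hfrac : |(e1 - e0 - B) * (t - t₁) / h| ≤ |e1 - e0 - B| := by
    rw [abs_div, abs_mul]
    rw [div_le_iff₀ (by positivity : (0:ℝ) < |h|)]
    have : |t - t₁| ≤ |h| := by
      rw [abs_of_nonneg (by linarith), abs_of_pos hh]; linarith
    nlinarith [abs_nonneg (e1 - e0 - B)]
  calc |(e1 - e0 - B) * (t - t₁) / h + e1 - A|
      ≤ |(e1 - e0 - B) * (t - t₁) / h| + |e1| + |A| := by
        have := abs_add_le ((e1 - e0 - B) * (t - t₁) / h + e1) (-A)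
        have h2 := abs_add_le ((e1 - e0 - B) * (t - t₁) / h) e1
        simp only [abs_neg] at this
        calc |(e1 - e0 - B) * (t - t₁) / h + e1 - A|
            = |((e1 - e0 - B) * (t - t₁) / h + e1) + (-A)| := by ring_nf
          _ ≤ _ := by linarith [this, h2]
    _ ≤ ε := by
        have h3 : |e1 - e0 - B| ≤ |e1| + |e0| + |B| := by
          calc |e1 - e0 - B| ≤ |e1 - e0| + |B| := abs_sub _ _
            _ ≤ |e1| + |e0| + |B| := by linarith [abs_sub e1 e0]
        linarith [hfrac, hA', hB, hg1, hg0]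
end
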